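/- arXiv:1806.02261 — 4 statements merged into one kernel-verified Lean document; each statement's English description precedes it below -/
import Mathlib

section
/- For all real x > 0, Γ((x+1)/2) / Γ(x/2) ≤ √x. -/
open Real

/-- Log-convexity of `Γ` at the midpoint of `s` and `s + 1`, together with `Γ (s + 1) = s Γ s`. -/
theorem Real.Gamma_add_half_le_sqrt_mul_Gamma {s : ℝ} (hs : 0 < s) :
    Gamma (s + 1 / 2) ≤ √s * Gamma s := by
  have hΓ : 0 ≤ Gamma s := (Gamma_pos_of_pos hs).le
  calc Gamma (s + 1 / 2) = Gamma (1 / 2 * s + 1 / 2 * (s + 1)) := by ring_nf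
    _ ≤ Gamma s ^ (1 / 2 : ℝ) * Gamma (s + 1) ^ (1 / 2 : ℝ) :=
      Gamma_mul_add_mul_le_rpow_Gamma_mul_rpow_Gamma hs (by linarith) (by norm_num) (by norm_num)
        (by norm_num)
    _ = √(s * Gamma s ^ 2) := by
      rw [Gamma_add_one hs.ne', ← mul_rpow hΓ (by positivity), ← sqrt_eq_rpow]
      ring_nf
    _ = √s * Gamma s := by rw [sqrt_mul hs.le, sqrt_sq hΓ]

theorem gamma_ratio_le_sqrt (x : ℝ) (hx : 0 < x) :
    Real.Gamma ((x + 1) / 2) / Real.Gamma (x / 2) ≤ Real.sqrt x := by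
  have hx2 : 0 < x / 2 := half_pos hx
  rw [div_le_iff₀ (Gamma_pos_of_pos hx2)]
  calc Gamma ((x + 1) / 2) = Gamma (x / 2 + 1 / 2) := by ring_nf
    _ ≤ √(x / 2) * Gamma (x / 2) := Gamma_add_half_le_sqrt_mul_Gamma hx2
    _ ≤ √x * Gamma (x / 2) := by
      gcongr
      linarith
end

section
/- The map x ↦ Γ(x + p/2) / Γ(x) is monotonically increasing on (0, ∞) for every fixed real p > 0. -/
/-! `log ∘ Γ` is convex on `(0, ∞)`, and the increment `f (x + c) - f x` of a convex function
over a fixed step `c ≥ 0` is nondecreasing in `x`; exponentiating gives the ratio. -/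

open Real Set

theorem ConvexOn.monotoneOn_sub_comp_add_const {𝕜 : Type*} [Field 𝕜] [LinearOrder 𝕜]
    [IsStrictOrderedRing 𝕜] {s : Set 𝕜} {f : 𝕜 → 𝕜} (hf : ConvexOn 𝕜 s f) {c : 𝕜} (hc : 0 ≤ c) :
    MonotoneOn (fun x => f (x + c) - f x) {x | x ∈ s ∧ x + c ∈ s} := by
  rintro x ⟨hxs, hxcs⟩ y ⟨hys, hycs⟩ hxy
  rcases hc.eq_or_lt with rfl | hc
  · simp
  have hslope : slope f x (x + c) ≤ slope f y (y + c) :=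
    calc slope f x (x + c)
        ≤ slope f x (y + c) := hf.slope_mono hxs ⟨hxcs, by simpa using hc.ne'⟩
            ⟨hycs, by simp only [mem_singleton_iff]; linarith⟩ (by linarith)
      _ = slope f (y + c) x := slope_comm f x (y + c)
      _ ≤ slope f (y + c) y := hf.slope_mono hycs ⟨hxs, by simp only [mem_singleton_iff]; linarith⟩
            ⟨hys, by simp only [mem_singleton_iff]; linarith⟩ hxy
      _ = slope f y (y + c) := slope_comm f (y + c) y
  simpa only [slope_def_field, add_sub_cancel_left, div_le_div_iff_of_pos_right hc] using hslope

theorem Real.Gamma_add_div_Gamma_eq_exp {x c : ℝ} (hx : 0 < x) (hxc : 0 < x + c) :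
    Gamma (x + c) / Gamma x = exp (log (Gamma (x + c)) - log (Gamma x)) := by
  rw [exp_sub, exp_log (Gamma_pos_of_pos hxc), exp_log (Gamma_pos_of_pos hx)]

theorem gamma_ratio_monotone (p : ℝ) (hp : 0 < p) :
    MonotoneOn (fun x : ℝ => Real.Gamma (x + p / 2) / Real.Gamma x) (Set.Ioi 0) := by
  have hc : 0 ≤ p / 2 := by positivity
  have hIoi : Ioi (0 : ℝ) ⊆ {x | x ∈ Ioi 0 ∧ x + p / 2 ∈ Ioi 0} := fun x hx =>
    ⟨hx, add_pos_of_pos_of_nonneg hx hc⟩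
  have hlog := (convexOn_log_Gamma.monotoneOn_sub_comp_add_const hc).mono hIoi
  refine (exp_monotone.comp_monotoneOn hlog).congr fun x hx => ?_
  exact (Gamma_add_div_Gamma_eq_exp hx (hIoi hx).2).symm
end

section
/- Let f_ν be the density of the p-dimensional multivariate Student's t distribution with ν > 0 degrees of freedom, location μ ∈ ℝ^p and positive definite scale matrix V. Then for every β > 0, ∫_{ℝ^p} f_ν(z)^{1+β} dz = [Γ((ν+p)/2)^{β+1} Γ((βν + βp + ν)/2)] / [Γ(ν/2)^{β+1} Γ((βν + βp + ν + p)/2)] · (νπ)^{-βp/2} |V|^{-β/2}. -/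
/-!
Raised to the power `1 + β`, the density is `C ^ (1 + β) (1 + (z - μ)ᵀ (ν V)⁻¹ (z - μ)) ^ (-s)`,
with `C` its normalising constant and `s = (ν + p) (1 + β) / 2`. Writing `ν V = Bᵀ B`, the
substitution `z = μ + Bᵀ x`, of Jacobian `|det B| = (ν ^ p det V) ^ (1/2)`, reduces the integral to
`∫ (1 + ‖x‖²) ^ (-s) dx = π ^ (p/2) Γ(s - p/2) / Γ(s)`. This follows from
`Γ(s) (1 + ‖x‖²) ^ (-s) = ∫₀^∞ t ^ (s-1) e ^ (-t) e ^ (-t ‖x‖²) dt` by integrating the Gaussian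
in `x` first.
-/

open Real MeasureTheory Matrix

/-- Density of the `p`-dimensional multivariate Student's t distribution with `ν` degrees of
freedom, location `μ` and scale matrix `V`. -/
noncomputable def mvtDensity (p : ℕ) (ν : ℝ) (μ : Fin p → ℝ)
    (V : Matrix (Fin p) (Fin p) ℝ) (z : Fin p → ℝ) : ℝ :=
  Real.Gamma ((ν + p) / 2) /
      (Real.Gamma (ν / 2) * ν ^ ((p : ℝ) / 2) * π ^ ((p : ℝ) / 2) * V.det ^ ((1 : ℝ) / 2)) *
    (1 + (1 / ν) * ((z - μ) ⬝ᵥ (V⁻¹ *ᵥ (z - μ)))) ^ (-(ν + p) / 2)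

open Set

theorem lintegral_ofReal_rpow_mul_exp_neg_mul_Ioi {s a : ℝ} (hs : 0 < s) (ha : 0 < a) :
    ∫⁻ t in Ioi (0 : ℝ), ENNReal.ofReal (t ^ (s - 1) * exp (-(a * t))) =
      ENNReal.ofReal ((1 / a) ^ s * Gamma s) := by
  have hint : IntegrableOn (fun t : ℝ ↦ t ^ (s - 1) * exp (-(a * t))) (Ioi 0) := by
    simpa [rpow_one, neg_mul] using
      integrableOn_rpow_mul_exp_neg_mul_rpow (p := 1) (s := s - 1) (by linarith) one_pos ha
  rw [← integral_rpow_mul_exp_neg_mul_Ioi hs ha, ofReal_integral_eq_lintegral_ofReal hint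
    (ae_restrict_of_forall_mem measurableSet_Ioi fun t (ht : 0 < t) ↦ by positivity)]

section InnerProductSpace

variable {E : Type*} [NormedAddCommGroup E] [InnerProductSpace ℝ E] [FiniteDimensional ℝ E]
  [MeasurableSpace E] [BorelSpace E]

theorem lintegral_ofReal_exp_neg_mul_sq_norm {b : ℝ} (hb : 0 < b) :
    ∫⁻ v : E, ENNReal.ofReal (exp (-b * ‖v‖ ^ 2)) =
      ENNReal.ofReal ((π / b) ^ (Module.finrank ℝ E / 2 : ℝ)) := by
  have h := GaussianFourier.integral_rexp_neg_mul_sq_norm (V := E) hb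
  rw [← h, ofReal_integral_eq_lintegral_ofReal
    (Integrable.of_integral_ne_zero (by rw [h]; positivity))
    (Filter.Eventually.of_forall fun v ↦ (exp_pos _).le)]

theorem integral_one_add_norm_sq_rpow_neg {s : ℝ} (hs : Module.finrank ℝ E < 2 * s) :
    ∫ v : E, (1 + ‖v‖ ^ 2) ^ (-s) =
      π ^ (Module.finrank ℝ E / 2 : ℝ) * Gamma (s - Module.finrank ℝ E / 2) / Gamma s := by
  set d : ℝ := (Module.finrank ℝ E : ℝ) with hd
  have hs0 : 0 < s := by have : (0 : ℝ) ≤ d := Nat.cast_nonneg _; linarith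
  have hsd : 0 < s - d / 2 := by linarith
  have hΓ : 0 < Gamma s := Gamma_pos_of_pos hs0
  have subordinate : ∀ v : E, ENNReal.ofReal (Gamma s) * ENNReal.ofReal ((1 + ‖v‖ ^ 2) ^ (-s)) =
      ∫⁻ t in Ioi (0 : ℝ), ENNReal.ofReal (t ^ (s - 1) * exp (-t) * exp (-t * ‖v‖ ^ 2)) := by
    intro v
    have hv : 0 < 1 + ‖v‖ ^ 2 := by positivity
    have hexp : ∀ t : ℝ, t ^ (s - 1) * exp (-t) * exp (-t * ‖v‖ ^ 2) =
        t ^ (s - 1) * exp (-((1 + ‖v‖ ^ 2) * t)) := fun t ↦ by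
      rw [mul_assoc, ← exp_add]; ring_nf
    simp_rw [hexp]
    rw [lintegral_ofReal_rpow_mul_exp_neg_mul_Ioi hs0 hv, ← ENNReal.ofReal_mul hΓ.le, one_div,
      inv_rpow hv.le, ← rpow_neg hv.le, mul_comm]
  have gaussian : ∀ t ∈ Ioi (0 : ℝ), ∫⁻ v : E,
      ENNReal.ofReal (t ^ (s - 1) * exp (-t) * exp (-t * ‖v‖ ^ 2)) =
        ENNReal.ofReal (π ^ (d / 2) * (t ^ (s - d / 2 - 1) * exp (-(1 * t)))) := by
    intro t (ht : 0 < t)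
    simp_rw [ENNReal.ofReal_mul (by positivity : (0 : ℝ) ≤ t ^ (s - 1) * exp (-t))]
    rw [lintegral_const_mul' _ _ ENNReal.ofReal_ne_top, lintegral_ofReal_exp_neg_mul_sq_norm ht,
      ← ENNReal.ofReal_mul (by positivity), ← hd, div_rpow pi_pos.le ht.le, sub_right_comm,
      rpow_sub ht (s - 1), one_mul]
    ring_nf
  have key : ENNReal.ofReal (Gamma s) * ∫⁻ v : E, ENNReal.ofReal ((1 + ‖v‖ ^ 2) ^ (-s)) =
      ENNReal.ofReal (π ^ (d / 2) * Gamma (s - d / 2)) := by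
    rw [← lintegral_const_mul _ (by fun_prop)]
    simp_rw [subordinate]
    rw [lintegral_lintegral_swap (by fun_prop), setLIntegral_congr_fun measurableSet_Ioi gaussian]
    simp_rw [ENNReal.ofReal_mul (by positivity : (0 : ℝ) ≤ π ^ (d / 2))]
    rw [lintegral_const_mul' _ _ ENNReal.ofReal_ne_top,
      lintegral_ofReal_rpow_mul_exp_neg_mul_Ioi hsd one_pos, div_one, one_rpow, one_mul]
  have hcont : Continuous fun v : E ↦ (1 + ‖v‖ ^ 2) ^ (-s) :=
    (continuous_const.add (continuous_norm.pow 2)).rpow_const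
      fun v ↦ Or.inl (by positivity : (0 : ℝ) < 1 + ‖v‖ ^ 2).ne'
  rw [integral_eq_lintegral_of_nonneg_ae
      (Filter.Eventually.of_forall fun v ↦ rpow_nonneg (by positivity) _)
      hcont.aestronglyMeasurable,
    (ENNReal.eq_div_iff (by simpa using hΓ) ENNReal.ofReal_ne_top).2 key, ENNReal.toReal_div,
    ENNReal.toReal_ofReal (by have := Gamma_pos_of_pos hsd; positivity),
    ENNReal.toReal_ofReal hΓ.le]

end InnerProductSpace

variable {ι : Type*} [Fintype ι]

theorem Matrix.transpose_mulVec_dotProduct_inv_mulVec [DecidableEq ι] {R : Type*} [CommRing R]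
    {B : Matrix ι ι R} (hB : IsUnit B.det) (x : ι → R) :
    (Bᵀ *ᵥ x) ⬝ᵥ ((Bᵀ * B)⁻¹ *ᵥ (Bᵀ *ᵥ x)) = x ⬝ᵥ x := by
  have hBt : IsUnit Bᵀ.det := by rwa [det_transpose]
  rw [mul_inv_rev, mulVec_mulVec, mul_assoc, nonsing_inv_mul _ hBt, mul_one, dotProduct_mulVec,
    mulVec_transpose, vecMul_vecMul, mul_nonsing_inv _ hB, vecMul_one]

theorem Matrix.one_div_mul_dotProduct_inv_mulVec [DecidableEq ι] {K : Type*} [Field K]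
    {V : Matrix ι ι K} (hV : IsUnit V.det) {ν : K} (hν : ν ≠ 0) (y : ι → K) :
    1 / ν * (y ⬝ᵥ (V⁻¹ *ᵥ y)) = y ⬝ᵥ ((ν • V)⁻¹ *ᵥ y) := by
  have : Invertible ν := invertibleOfNonzero hν
  rw [Matrix.inv_smul V ν hV, invOf_eq_inv, smul_mulVec, dotProduct_smul, smul_eq_mul, one_div]

theorem integral_comp_mulVec [DecidableEq ι] {E : Type*} [NormedAddCommGroup E] [NormedSpace ℝ E]
    {M : Matrix ι ι ℝ} (hM : M.det ≠ 0) (g : (ι → ℝ) → E) :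
    ∫ x, g (M *ᵥ x) = |M.det|⁻¹ • ∫ z, g z := by
  let e : (ι → ℝ) ≃L[ℝ] (ι → ℝ) :=
    (M.toLin'.equivOfDetNeZero (by rwa [LinearMap.det_toLin'])).toContinuousLinearEquiv
  have he : MeasurableEmbedding e := e.toHomeomorph.measurableEmbedding
  have hmap : Measure.map e volume = ENNReal.ofReal |M.det⁻¹| • volume :=
    Real.map_matrix_volume_pi_eq_smul_volume_pi hM
  change ∫ x, g (e x) = _
  rw [← he.integral_map, hmap, integral_smul_measure, ENNReal.toReal_ofReal (abs_nonneg _),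
    abs_inv]

theorem integral_one_add_dotProduct_self_rpow_neg {s : ℝ} (hs : Fintype.card ι < 2 * s) :
    ∫ x : ι → ℝ, (1 + x ⬝ᵥ x) ^ (-s) =
      π ^ (Fintype.card ι / 2 : ℝ) * Gamma (s - Fintype.card ι / 2) / Gamma s := by
  rw [← (EuclideanSpace.volume_preserving_symm_measurableEquiv_toLp ι).integral_comp']
  have hnorm : ∀ v : EuclideanSpace ℝ ι, (MeasurableEquiv.toLp 2 (ι → ℝ)).symm v ⬝ᵥ
      (MeasurableEquiv.toLp 2 (ι → ℝ)).symm v = ‖v‖ ^ 2 := fun v ↦ by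
    rw [EuclideanSpace.real_norm_sq_eq]; simp [dotProduct, sq]
  simp_rw [hnorm]
  rw [integral_one_add_norm_sq_rpow_neg (by simpa using hs), finrank_euclideanSpace]

open scoped MatrixOrder in
theorem integral_one_add_dotProduct_inv_mulVec_rpow_neg [DecidableEq ι] {V : Matrix ι ι ℝ}
    (hV : V.PosDef) {s : ℝ} (hs : Fintype.card ι < 2 * s) (μ : ι → ℝ) :
    ∫ z : ι → ℝ, (1 + (z - μ) ⬝ᵥ (V⁻¹ *ᵥ (z - μ))) ^ (-s) =
      V.det ^ (1 / 2 : ℝ) *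
        (π ^ (Fintype.card ι / 2 : ℝ) * Gamma (s - Fintype.card ι / 2) / Gamma s) := by
  obtain ⟨B, rfl⟩ := CStarAlgebra.nonneg_iff_eq_star_mul_self.mp hV.posSemidef.nonneg
  rw [star_eq_conjTranspose, conjTranspose_eq_transpose_of_trivial] at hV ⊢
  have hdet : (Bᵀ * B).det = Bᵀ.det ^ 2 := by rw [det_mul, det_transpose, sq]
  have hBt : Bᵀ.det ≠ 0 := fun h ↦ hV.det_pos.ne' (by rw [hdet, h, sq, zero_mul])
  have hB : IsUnit B.det := by rw [← det_transpose]; exact hBt.isUnit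
  calc ∫ z : ι → ℝ, (1 + (z - μ) ⬝ᵥ ((Bᵀ * B)⁻¹ *ᵥ (z - μ))) ^ (-s)
      = ∫ y : ι → ℝ, (1 + y ⬝ᵥ ((Bᵀ * B)⁻¹ *ᵥ y)) ^ (-s) :=
        integral_sub_right_eq_self (fun y ↦ (1 + y ⬝ᵥ ((Bᵀ * B)⁻¹ *ᵥ y)) ^ (-s)) μ
    _ = |Bᵀ.det| * ∫ x : ι → ℝ, (1 + (Bᵀ *ᵥ x) ⬝ᵥ ((Bᵀ * B)⁻¹ *ᵥ (Bᵀ *ᵥ x))) ^ (-s) := by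
        rw [integral_comp_mulVec hBt fun y ↦ (1 + y ⬝ᵥ ((Bᵀ * B)⁻¹ *ᵥ y)) ^ (-s), smul_eq_mul,
          mul_inv_cancel_left₀ (abs_ne_zero.mpr hBt)]
    _ = |Bᵀ.det| * ∫ x : ι → ℝ, (1 + x ⬝ᵥ x) ^ (-s) := by
        simp_rw [transpose_mulVec_dotProduct_inv_mulVec hB]
    _ = _ := by
        rw [integral_one_add_dotProduct_self_rpow_neg hs, hdet, ← sqrt_eq_rpow, sqrt_sq_eq_abs]

theorem mvtDensity_rpow {p : ℕ} {ν : ℝ} (hν : 0 < ν) (μ : Fin p → ℝ)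
    {V : Matrix (Fin p) (Fin p) ℝ} (hV : V.PosDef) (r : ℝ) (z : Fin p → ℝ) :
    mvtDensity p ν μ V z ^ r =
      (Gamma ((ν + p) / 2) /
          (Gamma (ν / 2) * ν ^ ((p : ℝ) / 2) * π ^ ((p : ℝ) / 2) * V.det ^ ((1 : ℝ) / 2))) ^ r *
        (1 + (z - μ) ⬝ᵥ ((ν • V)⁻¹ *ᵥ (z - μ))) ^ (-((ν + p) / 2 * r)) := by
  have hq : 0 ≤ (z - μ) ⬝ᵥ ((ν • V)⁻¹ *ᵥ (z - μ)) := by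
    simpa using (hV.smul hν).posSemidef.inv.re_dotProduct_nonneg (z - μ)
  have hd := hV.det_pos
  rw [mvtDensity, one_div_mul_dotProduct_inv_mulVec hd.ne'.isUnit hν.ne',
    mul_rpow (by positivity) (by positivity), ← rpow_mul (by positivity)]
  ring_nf

theorem div_rpow_one_add_mul_self {c x : ℝ} (hc : 0 ≤ c) (hx : 0 < x) (β : ℝ) :
    (c / x) ^ (1 + β) * x = c ^ (1 + β) * x ^ (-β) := by
  rw [div_rpow hc hx.le, rpow_add hx, rpow_one, rpow_neg hx.le]
  field_simp

theorem mvt_power_integral (p : ℕ) (ν β : ℝ) (hν : 0 < ν) (hβ : 0 < β)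
    (μ : Fin p → ℝ) (V : Matrix (Fin p) (Fin p) ℝ) (hV : V.PosDef) :
    ∫ z : Fin p → ℝ, mvtDensity p ν μ V z ^ (1 + β) =
      (Real.Gamma ((ν + p) / 2) ^ (β + 1) * Real.Gamma ((β * ν + β * p + ν) / 2)) /
        (Real.Gamma (ν / 2) ^ (β + 1) * Real.Gamma ((β * ν + β * p + ν + p) / 2)) *
        (ν * π) ^ (-(β * p) / 2) * V.det ^ (-β / 2) := by
  have hd := hV.det_pos
  set x := ν ^ ((p : ℝ) / 2) * π ^ ((p : ℝ) / 2) * V.det ^ ((1 : ℝ) / 2)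
  have hx : 0 < x := by positivity
  have hx_rpow : x ^ (-β) = (ν * π) ^ (-(β * p) / 2) * V.det ^ (-β / 2) := by
    rw [mul_rpow (by positivity) (by positivity), mul_rpow (by positivity) (by positivity),
      ← rpow_mul hν.le, ← rpow_mul pi_pos.le, ← rpow_mul hd.le, mul_rpow hν.le pi_pos.le]
    ring_nf
  simp_rw [mvtDensity_rpow hν μ hV]
  rw [integral_const_mul, integral_one_add_dotProduct_inv_mulVec_rpow_neg (hV.smul hν)
      (by rw [Fintype.card_fin]; nlinarith),
    Fintype.card_fin, det_smul, Fintype.card_fin, mul_rpow (by positivity) hd.le, ← rpow_natCast,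
    ← rpow_mul hν.le, mul_one_div,
    show (ν + p) / 2 * (1 + β) - p / 2 = (β * ν + β * p + ν) / 2 by ring,
    show (ν + p) / 2 * (1 + β) = (β * ν + β * p + ν + p) / 2 by ring]
  calc _ = (Gamma ((ν + p) / 2) / Gamma (ν / 2) / x) ^ (1 + β) * x *
        (Gamma ((β * ν + β * p + ν) / 2) / Gamma ((β * ν + β * p + ν + p) / 2)) := by
        simp only [x]; ring_nf
    _ = _ := by
      rw [div_rpow_one_add_mul_self (by positivity) hx, hx_rpow,
        div_rpow (by positivity) (by positivity), add_comm 1 β]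
      ring
end

section
/- Fix β > 0 and an integer p > 1. Define w(ν) = (1 + p/ν)^{β(ν+p-1)/2} for ν > 0. Then w is strictly decreasing in ν. For p = 1, w is strictly increasing in ν. -/
/-!
Write `w(ν) = exp (β/2 · g(ν))` with `g(ν) = (ν + p - 1) log (1 + p/ν)`; since `β > 0` it suffices
to find the sign of `g'`. With `t = 1 + p/ν > 1`,
`g'(ν) = log t - (ν + p - 1)(p/ν²)/t`. For `p = 1` the subtracted term is exactly `1 - t⁻¹`,
which lies strictly below `log t`. For `p ≥ 2` it is at least `(t - t⁻¹)/2 = sinh (log t)`,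
which lies strictly above `log t`.
-/

open Real Set

namespace Real

theorem one_sub_inv_lt_log {x : ℝ} (hx : 0 < x) (hx1 : x ≠ 1) : 1 - x⁻¹ < log x := by
  have := log_lt_sub_one_of_pos (inv_pos.2 hx) (inv_ne_one.2 hx1)
  rw [log_inv] at this
  linarith

theorem log_lt_sub_inv_div_two {x : ℝ} (hx : 1 < x) : log x < (x - x⁻¹) / 2 := by
  simpa [sinh_log (by linarith : 0 < x)] using self_lt_sinh_iff.2 (log_pos hx)

end Real

/-- `(2/β) log w(ν)`, for the parameter `p` taken real. -/
noncomputable def logWeight (p ν : ℝ) : ℝ := (ν + p - 1) * log (1 + p / ν)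

section logWeight

variable {p ν : ℝ}

theorem hasDerivAt_logWeight (hp : 0 ≤ p) (hν : 0 < ν) :
    HasDerivAt (logWeight p)
      (log (1 + p / ν) - (ν + p - 1) * (p / ν ^ 2) / (1 + p / ν)) ν := by
  have ht : 1 + p / ν ≠ 0 := by positivity
  have hinner : HasDerivAt (fun x => 1 + p / x) (-(p / ν ^ 2)) ν := by
    simpa [div_eq_mul_inv] using ((hasDerivAt_inv hν.ne').const_mul p).const_add 1
  have hlin : HasDerivAt (fun x => x + p - 1) 1 ν :=
    ((hasDerivAt_id ν).add_const p).sub_const 1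
  exact (hlin.mul (hinner.log ht)).congr_deriv (by ring)

theorem logWeight_deriv_neg (hp : 2 ≤ p) (hν : 0 < ν) :
    log (1 + p / ν) - (ν + p - 1) * (p / ν ^ 2) / (1 + p / ν) < 0 := by
  have hlog := log_lt_sub_inv_div_two (lt_add_of_pos_right 1 (by positivity : 0 < p / ν))
  have hsinh : (1 + p / ν - (1 + p / ν)⁻¹) / 2 ≤ (ν + p - 1) * (p / ν ^ 2) / (1 + p / ν) := by
    rw [div_le_div_iff₀ two_pos (by positivity)]
    field_simp
    nlinarith [mul_pos hν (by linarith : 0 < p)]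
  linarith

theorem logWeight_one_deriv_pos (hν : 0 < ν) :
    0 < log (1 + 1 / ν) - (ν + 1 - 1) * (1 / ν ^ 2) / (1 + 1 / ν) := by
  have ht : 0 < 1 + 1 / ν := by positivity
  have hlog := one_sub_inv_lt_log ht (by simp [hν.ne'])
  have heq : (ν + 1 - 1) * (1 / ν ^ 2) / (1 + 1 / ν) = 1 - (1 + 1 / ν)⁻¹ := by
    field_simp
    ring
  linarith

theorem strictAntiOn_logWeight (hp : 2 ≤ p) : StrictAntiOn (logWeight p) (Ioi 0) := by
  have hderiv (x : ℝ) (hx : 0 < x) := hasDerivAt_logWeight (p := p) (by linarith) hx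
  refine strictAntiOn_of_deriv_neg (convex_Ioi 0)
    (fun x hx => (hderiv x hx).continuousAt.continuousWithinAt) fun x hx => ?_
  rw [interior_Ioi] at hx
  rw [(hderiv x hx).deriv]
  exact logWeight_deriv_neg hp hx

theorem strictMonoOn_logWeight_one : StrictMonoOn (logWeight 1) (Ioi 0) := by
  have hderiv (x : ℝ) (hx : 0 < x) := hasDerivAt_logWeight zero_le_one hx
  refine strictMonoOn_of_deriv_pos (convex_Ioi 0)
    (fun x hx => (hderiv x hx).continuousAt.continuousWithinAt) fun x hx => ?_
  rw [interior_Ioi] at hx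
  rw [(hderiv x hx).deriv]
  exact logWeight_one_deriv_pos hx

theorem rpow_eq_exp_logWeight (β : ℝ) (hp : 0 ≤ p) (hν : 0 < ν) :
    (1 + p / ν) ^ (β * (ν + p - 1) / 2) = exp (β / 2 * logWeight p ν) := by
  rw [rpow_def_of_pos (by positivity), logWeight]
  ring_nf

end logWeight

theorem w_monotonicity (β : ℝ) (hβ : 0 < β) (p : ℕ) :
    (1 < p → StrictAntiOn (fun ν : ℝ => (1 + (p : ℝ) / ν) ^ (β * (ν + p - 1) / 2)) (Set.Ioi 0)) ∧
    (p = 1 → StrictMonoOn (fun ν : ℝ => (1 + (p : ℝ) / ν) ^ (β * (ν + p - 1) / 2)) (Set.Ioi 0)) := by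
  have hw : EqOn (fun ν => exp (β / 2 * logWeight p ν))
      (fun ν : ℝ => (1 + (p : ℝ) / ν) ^ (β * (ν + p - 1) / 2)) (Ioi 0) :=
    fun ν hν => (rpow_eq_exp_logWeight β p.cast_nonneg hν).symm
  have hexp : StrictMono fun y => exp (β / 2 * y) :=
    exp_strictMono.comp (strictMono_mul_left_of_pos (half_pos hβ))
  refine ⟨fun hp => ?_, fun hp => ?_⟩
  · have hp2 : (2 : ℝ) ≤ p := by exact_mod_cast hp
    exact (hexp.comp_strictAntiOn (strictAntiOn_logWeight hp2)).congr hw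
  · subst hp
    exact (hexp.comp_strictMonoOn (by simpa using strictMonoOn_logWeight_one)).congr hw
end
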